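/- Let X, Y, Z be independent random variables, each uniformly distributed on [0,1]. For every Borel set D ⊆ ℝ, P( (X < Y and Z + min(X,Y) ∈ D) or (Y < X and Z + min(X,Y) ∉ D) ) = 1/2. -/

import Mathlib

/-!
Swapping `X` and `Y` preserves the law of `(X, Y, Z)` and fixes `Z + min X Y`, but exchanges the
events `X < Y` and `Y < X`. So it maps the winning event `E` of `D` to an event disjoint from `E`,
and the two together cover everything except the null diagonal `X = Y`. Having equal probability,
each of them has probability `1/2`.
-/

open MeasureTheory Set

/-- The uniform probability measure on the real interval `[a, b]`:
normalized Lebesgue measure restricted to `Icc a b`. -/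
noncomputable def unif (a b : ℝ) : Measure ℝ :=
  (volume (Set.Icc a b))⁻¹ • volume.restrict (Set.Icc a b)

instance (a b : ℝ) : SFinite (unif a b) := by unfold unif; infer_instance

instance (a b : ℝ) : NullSingletonClass (unif a b) where
  measure_singleton x := by simp [unif]

lemma isProbabilityMeasure_unif {a b : ℝ} (hab : a < b) : IsProbabilityMeasure (unif a b) := by
  constructor
  simp only [unif, Measure.smul_apply, Measure.restrict_apply_univ, Real.volume_Icc, smul_eq_mul]
  exact ENNReal.inv_mul_cancel (by simpa using hab) ENNReal.ofReal_ne_top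

section Product

variable {α β : Type*} [MeasurableSpace α] [MeasurableSpace β] (μ : Measure α) (ν : Measure β)
  [SFinite μ] [SFinite ν]

lemma measurePreserving_swap_fst_fst :
    MeasurePreserving (fun p : α × α × β => (p.2.1, p.1, p.2.2))
      (μ.prod (μ.prod ν)) (μ.prod (μ.prod ν)) :=
  (measurePreserving_prodAssoc μ μ ν).comp <|
    (Measure.measurePreserving_swap.prod (MeasurePreserving.id ν)).comp <|
      (measurePreserving_prodAssoc μ μ ν).symm MeasurableEquiv.prodAssoc

lemma Measure.prod_setOf_fst_eq_eq_zero [MeasurableEq α] [NullSingletonClass μ] {f : β → α}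
    (hf : Measurable f) : (μ.prod ν) {p | p.1 = f p.2} = 0 := by
  rw [Measure.prod_apply_symm (measurableSet_eq_fun measurable_fst (hf.comp measurable_snd) :
    MeasurableSet {p : α × β | p.1 = f p.2})]
  simp

end Product

lemma measure_eq_half_of_disjoint_preimage {Ω : Type*} [MeasurableSpace Ω] {μ : Measure Ω}
    [IsProbabilityMeasure μ] {T : Ω → Ω} (hT : MeasurePreserving T μ μ) {E : Set Ω}
    (hE : MeasurableSet E) (hdisj : Disjoint E (T ⁻¹' E)) (hcover : μ (E ∪ T ⁻¹' E)ᶜ = 0) :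
    μ E = 1 / 2 := by
  have hTE : MeasurableSet (T ⁻¹' E) := hT.measurable hE
  have hunion : μ (E ∪ T ⁻¹' E) = 1 := (prob_compl_eq_zero_iff (hE.union hTE)).1 hcover
  rw [measure_union hdisj hTE, hT.measure_preimage hE.nullMeasurableSet, ← two_mul] at hunion
  rw [ENNReal.eq_div_iff two_ne_zero ENNReal.ofNat_ne_top, hunion]

/-- Let `X`, `Y`, `Z` be independent, each `Uni(0,1)` (modelled by the product measure,
with `p = (x, y, z)`).  For every Borel set `D ⊆ ℝ`,
`P((X < Y ∧ Z + min X Y ∈ D) ∨ (Y < X ∧ Z + min X Y ∉ D)) = 1/2`. -/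
theorem stmt_9 (D : Set ℝ) (hD : MeasurableSet D) :
    ((unif 0 1).prod ((unif 0 1).prod (unif 0 1)))
        {p : ℝ × ℝ × ℝ |
          (p.1 < p.2.1 ∧ p.2.2 + min p.1 p.2.1 ∈ D) ∨
          (p.2.1 < p.1 ∧ p.2.2 + min p.1 p.2.1 ∉ D)} = 1/2 := by
  have := isProbabilityMeasure_unif (zero_lt_one' ℝ)
  have hsum : MeasurableSet {p : ℝ × ℝ × ℝ | p.2.2 + min p.1 p.2.1 ∈ D} :=
    (by fun_prop : Measurable fun p : ℝ × ℝ × ℝ => p.2.2 + min p.1 p.2.1) hD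
  refine measure_eq_half_of_disjoint_preimage (measurePreserving_swap_fst_fst _ _) ?_ ?_ ?_
  · exact ((measurableSet_lt measurable_fst measurable_snd.fst).inter hsum).union
      ((measurableSet_lt measurable_snd.fst measurable_fst).inter hsum.compl)
  · refine disjoint_left.2 fun ⟨x, y, z⟩ h h' => ?_
    simp only [mem_preimage, mem_ofPred_eq, min_comm y x] at h h'
    have := @lt_asymm _ _ x y
    tauto
  · refine measure_mono_null (fun ⟨x, y, z⟩ h => ?_)
      (Measure.prod_setOf_fst_eq_eq_zero _ _ measurable_fst)
    simp only [mem_compl_iff, mem_union, mem_preimage, mem_ofPred_eq, min_comm y x] at h ⊢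
    by_contra hxy
    have := lt_or_gt_of_ne hxy
    tauto
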